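/- Let R be a commutative local ring. Then every A ∈ M₂(R) with tr(A) ∈ U(R) is strongly rad-clean if and only if for all λ ∈ J(R) and μ ∈ U(R) the quadratic equation x² + μx + λ = 0 has a solution in R. -/

import Mathlib

/-! If `det A` is a unit then `A` is a unit, hence strongly rad-clean with `e = 0`; otherwise
`det A ∈ J(R)` and the quadratic of the statement is the characteristic polynomial
`X² - tr A • X + det A` of `A`.

If it has a root, it splits as `(X - x)(X - y)` with `x ∈ J(R)` and `y` a unit, and the spectral
idempotent `e = (A - y)/(x - y)` writes `A = x e + y (1 - e)`; then `A - e` is a unit,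
`e A e = x e`, and `x e` lies in the Jacobson radical of the corner ring `eSe`.

Conversely, let `E` be the idempotent of a strongly rad-clean `A`. It is not `0` since `A` is not a
unit, and not `1` since `A ∉ J(M₂(R))` when `tr A` is a unit and `det A` is not. Over a local
ring this forces `det E = 0` and `tr E = 1`, and Cayley–Hamilton applied to `A` and to `AE` (of
determinant `0`) shows that `tr (AE)` is a root. Applied to the companion matrix of
`X² + μX + λ` this is the forward implication. -/

/-- `j` lies in the Jacobson radical of the corner ring `eSe` (with identity `e`):
every element of the form `e - (eye)·j` is invertible in the corner ring. -/
def MemCornerJacobson {S : Type*} [Ring S] (e j : S) : Prop :=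
  ∀ y : S, ∃ s : S,
    e * s * e = s ∧ s * (e - e * y * e * j) = e ∧ (e - e * y * e * j) * s = e

/-- `a` is strongly rad-clean: `a = e + u` with `e` idempotent, `u` a unit,
`ae = ea` and `eae ∈ J(eSe)`. -/
def IsStronglyRadClean {S : Type*} [Ring S] (a : S) : Prop :=
  ∃ e : S, IsIdempotentElem e ∧ IsUnit (a - e) ∧ a * e = e * a ∧
    MemCornerJacobson e (e * a * e)

open IsLocalRing

theorem IsIdempotentElem.eq_zero_or_eq_one_of_isLocalRing {R : Type*} [CommRing R]
    [IsLocalRing R] {e : R} (he : IsIdempotentElem e) : e = 0 ∨ e = 1 := by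
  rcases isUnit_or_isUnit_one_sub_self e with hu | hu
  · exact .inr ((IsIdempotentElem.iff_eq_one_of_isUnit hu).mp he)
  · exact .inl (by simpa using (IsIdempotentElem.iff_eq_one_of_isUnit hu).mp he.one_sub)

section Algebra

variable {R S : Type*} [CommRing R] [Ring S] [Algebra R S]

theorem IsIdempotentElem.isUnit_smul_add_smul_one_sub {e : S} (he : IsIdempotentElem e)
    {a b : R} (ha : IsUnit a) (hb : IsUnit b) : IsUnit (a • e + b • (1 - e)) := by
  obtain ⟨a, rfl⟩ := ha
  obtain ⟨b, rfl⟩ := hb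
  have hinv (a b : Rˣ) :
      ((a : R) • e + (b : R) • (1 - e)) * ((↑a⁻¹ : R) • e + (↑b⁻¹ : R) • (1 - e)) = 1 := by
    simp only [add_mul, mul_add, smul_mul_smul, he.eq, he.one_sub.eq, he.mul_one_sub_self,
      he.one_sub_mul_self, Units.mul_inv, one_smul, smul_zero, add_zero, zero_add, add_sub_cancel]
  exact ⟨⟨_, _, hinv a b, by simpa using hinv a⁻¹ b⁻¹⟩, rfl⟩

theorem IsIdempotentElem.memCornerJacobson_smul {e : S} (he : IsIdempotentElem e) {x : R}
    (hx : ∀ s : S, IsUnit (1 - x • s)) : MemCornerJacobson e (x • e) := by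
  intro y
  set z := e * y * e
  have hez : e * z = z := by simp only [z, ← mul_assoc, he.eq]
  have hze : z * e = z := by simp only [z, mul_assoc, he.eq]
  obtain ⟨u, hu⟩ := hx z
  have hleft : e * u = e - z * (x • e) := by
    rw [hu, mul_sub, mul_one, mul_smul_comm, hez, mul_smul_comm, hze]
  have hright : u * e = e - z * (x • e) := by
    rw [hu, sub_mul, one_mul, smul_mul_assoc, hze, mul_smul_comm, hze]
  have hcomm : Commute e u := hleft.trans hright.symm
  have hev : e * ↑u⁻¹ = ↑u⁻¹ * e := hcomm.units_inv_right.eq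
  refine ⟨↑u⁻¹ * e, ?_, ?_, ?_⟩
  · rw [← mul_assoc, hev, mul_assoc, he.eq, mul_assoc, he.eq]
  · rw [← hright, mul_assoc, ← mul_assoc e, hcomm.eq, mul_assoc, he.eq, ← mul_assoc,
      Units.inv_mul, one_mul]
  · rw [← hright, mul_assoc, ← mul_assoc e, hev, mul_assoc, he.eq, ← mul_assoc, Units.mul_inv,
      one_mul]

theorem exists_isIdempotentElem_eq_smul_add_smul {a : S} {x y : R}
    (h : (a - x • 1) * (a - y • 1) = 0) (hxy : IsUnit (x - y)) :
    ∃ e : S, IsIdempotentElem e ∧ a = x • e + y • (1 - e) := by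
  obtain ⟨w, hw⟩ := hxy.exists_left_inv
  have hsplit : a - y • 1 = (a - x • 1) + (x - y) • 1 := by module
  refine ⟨w • (a - y • 1), ?_, ?_⟩
  · rw [IsIdempotentElem, smul_mul_smul_comm]
    nth_rewrite 1 [hsplit]
    rw [add_mul, h, zero_add, smul_mul_assoc, one_mul, smul_smul, mul_assoc, hw, mul_one]
  · have : x • (w • (a - y • 1)) + y • (1 - w • (a - y • 1)) =
        a + (w * (x - y) - 1) • (a - y • 1) := by
      module
    rw [this, hw, sub_self, zero_smul, add_zero]

theorem isStronglyRadClean_smul_add_smul {e : S} (he : IsIdempotentElem e) {x y : R}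
    (hx : ∀ s : S, IsUnit (1 - x • s)) (hx1 : IsUnit (x - 1)) (hy : IsUnit y) :
    IsStronglyRadClean (x • e + y • (1 - e)) := by
  have hae : (x • e + y • (1 - e)) * e = x • e := by
    rw [add_mul, smul_mul_assoc, smul_mul_assoc, he.eq, he.one_sub_mul_self, smul_zero, add_zero]
  have hea : e * (x • e + y • (1 - e)) = x • e := by
    rw [mul_add, mul_smul_comm, mul_smul_comm, he.eq, he.mul_one_sub_self, smul_zero, add_zero]
  refine ⟨e, he, ?_, hae.trans hea.symm, ?_⟩
  · convert he.isUnit_smul_add_smul_one_sub hx1 hy using 1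
    module
  · rw [hea, smul_mul_assoc, he.eq]
    exact he.memCornerJacobson_smul hx

end Algebra

theorem isStronglyRadClean_of_isUnit {S : Type*} [Ring S] {a : S} (ha : IsUnit a) :
    IsStronglyRadClean a :=
  ⟨0, .zero, by rwa [sub_zero], by simp, fun _ ↦ ⟨0, by simp⟩⟩

namespace IsLocalRing

variable {R : Type*} [CommRing R] [IsLocalRing R]

theorem isUnit_sub_of_mem_maximalIdeal {x y : R} (hx : x ∈ maximalIdeal R) (hy : IsUnit y) :
    IsUnit (x - y) := by
  rw [← notMem_maximalIdeal] at hy ⊢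
  exact fun hxy ↦ hy (by simpa using (maximalIdeal R).sub_mem hx hxy)

theorem exists_mem_maximalIdeal_isUnit_add_eq_mul_eq {t d r : R} (ht : IsUnit t)
    (hd : d ∈ maximalIdeal R) (hr : r ^ 2 - t * r + d = 0) :
    ∃ x y : R, x ∈ maximalIdeal R ∧ IsUnit y ∧ x + y = t ∧ x * y = d := by
  by_cases hrm : r ∈ maximalIdeal R
  · refine ⟨r, t - r, hrm, ?_, by ring, by linear_combination -hr⟩
    rw [← notMem_maximalIdeal] at ht ⊢
    exact fun h ↦ ht (by simpa using (maximalIdeal R).add_mem hrm h)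
  · have hru := notMem_maximalIdeal.mp hrm
    have hprod : (t - r) * r = d := by linear_combination -hr
    exact ⟨t - r, r, fun h ↦ hd (hprod ▸ h.mul hru), hru, by ring, hprod⟩

end IsLocalRing

namespace Matrix

variable {R : Type*} [CommRing R]

theorem mul_self_fin_two (A : Matrix (Fin 2) (Fin 2) R) : A * A = A.trace • A - A.det • 1 := by
  ext i j
  fin_cases i <;> fin_cases j <;>
    simp [mul_apply, trace_fin_two, det_fin_two] <;> ring

theorem det_one_sub_fin_two (A : Matrix (Fin 2) (Fin 2) R) :
    (1 - A).det = 1 - A.trace + A.det := by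
  simp [det_fin_two, trace_fin_two]
  ring

theorem sub_smul_one_mul_sub_smul_one_fin_two {A : Matrix (Fin 2) (Fin 2) R} {x y : R}
    (hsum : x + y = A.trace) (hprod : x * y = A.det) : (A - x • 1) * (A - y • 1) = 0 := by
  have hexpand : (A - x • 1) * (A - y • 1) = A * A - (x + y) • A + (x * y) • 1 := by
    simp only [sub_mul, mul_sub, smul_mul_assoc, mul_smul_comm, one_mul, mul_one]
    module
  rw [hexpand, hsum, hprod, mul_self_fin_two]
  module

theorem trace_mul_sq_sub_trace_mul_add_det {A E : Matrix (Fin 2) (Fin 2) R}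
    (hE : IsIdempotentElem E) (hAE : Commute A E) (hdet : E.det = 0) (htr : E.trace = 1) :
    (A * E).trace ^ 2 - A.trace * (A * E).trace + A.det = 0 := by
  have hsq : (A * E) * (A * E) = (A * A) * E := by
    rw [mul_assoc, ← mul_assoc E, ← hAE.eq, mul_assoc, hE.eq, mul_assoc]
  have key : (A * E).trace • (A * E) = A.trace • (A * E) - A.det • E := by
    have hB := mul_self_fin_two (A * E)
    rw [det_mul, hdet, mul_zero, zero_smul, sub_zero, hsq, mul_self_fin_two, sub_mul,
      smul_mul_assoc, smul_mul_assoc, one_mul] at hB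
    exact hB.symm
  have := congrArg trace key
  simp only [trace_smul, trace_sub, htr, smul_eq_mul] at this
  linear_combination this

variable [IsLocalRing R]

theorem isUnit_one_sub_smul_of_mem_maximalIdeal {n : Type*} [Fintype n] [DecidableEq n] {x : R}
    (hx : x ∈ maximalIdeal R) (M : Matrix n n R) : IsUnit (1 - x • M) := by
  rw [isUnit_iff_isUnit_det, ← isUnit_map_iff (residue R), RingHom.map_det]
  have : (residue R).mapMatrix (1 - x • M) = 1 := by
    ext i j
    simp [one_apply, apply_ite, (residue_eq_zero_iff x).mpr hx]
  simp [this]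

theorem det_eq_zero_of_isIdempotentElem {n : Type*} [Fintype n] [DecidableEq n]
    {E : Matrix n n R} (hE : IsIdempotentElem E) (hE1 : E ≠ 1) : E.det = 0 := by
  have hdet : IsIdempotentElem E.det := by rw [IsIdempotentElem, ← det_mul, hE.eq]
  refine hdet.eq_zero_or_eq_one_of_isLocalRing.resolve_right fun h ↦ hE1 ?_
  exact (IsIdempotentElem.iff_eq_one_of_isUnit
    ((isUnit_iff_isUnit_det E).mpr (h ▸ isUnit_one))).mp hE

theorem det_eq_zero_and_trace_eq_one_of_isIdempotentElem {E : Matrix (Fin 2) (Fin 2) R}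
    (hE : IsIdempotentElem E) (hE0 : E ≠ 0) (hE1 : E ≠ 1) : E.det = 0 ∧ E.trace = 1 := by
  have hdet := det_eq_zero_of_isIdempotentElem hE hE1
  have hdet' := det_eq_zero_of_isIdempotentElem hE.one_sub (by simpa [sub_eq_self] using hE0)
  rw [det_one_sub_fin_two, hdet] at hdet'
  exact ⟨hdet, by linear_combination -hdet'⟩

theorem not_memCornerJacobson_one {A : Matrix (Fin 2) (Fin 2) R} (htr : IsUnit A.trace)
    (hdet : A.det ∈ maximalIdeal R) : ¬ MemCornerJacobson 1 A := by
  intro hA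
  obtain ⟨c, hc⟩ := htr.exists_left_inv
  obtain ⟨s, -, hs, -⟩ := hA (c • 1)
  have hunit : IsUnit (1 - c • A).det := isUnit_det_of_left_inverse (by simpa using hs)
  have : (1 - c • A).det = c ^ 2 * A.det := by
    rw [det_one_sub_fin_two, trace_smul, det_smul, smul_eq_mul, hc, Fintype.card_fin]
    ring
  exact hdet (isUnit_of_mul_isUnit_right (this ▸ hunit))

theorem exists_root_of_isStronglyRadClean {A : Matrix (Fin 2) (Fin 2) R}
    (hA : IsStronglyRadClean A) (htr : IsUnit A.trace) (hdet : A.det ∈ maximalIdeal R) :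
    ∃ x : R, x ^ 2 - A.trace * x + A.det = 0 := by
  obtain ⟨E, hE, hunit, hAE, hcorner⟩ := hA
  have hE0 : E ≠ 0 := by
    rintro rfl
    exact hdet ((isUnit_iff_isUnit_det A).mp (by simpa using hunit))
  have hE1 : E ≠ 1 := by
    rintro rfl
    exact not_memCornerJacobson_one htr hdet (by simpa using hcorner)
  obtain ⟨hdetE, htrE⟩ := det_eq_zero_and_trace_eq_one_of_isIdempotentElem hE hE0 hE1
  exact ⟨_, trace_mul_sq_sub_trace_mul_add_det hE hAE hdetE htrE⟩

theorem isStronglyRadClean_of_root {A : Matrix (Fin 2) (Fin 2) R} (htr : IsUnit A.trace)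
    (hdet : A.det ∈ maximalIdeal R) {r : R} (hr : r ^ 2 - A.trace * r + A.det = 0) :
    IsStronglyRadClean A := by
  obtain ⟨x, y, hx, hy, hsum, hprod⟩ := exists_mem_maximalIdeal_isUnit_add_eq_mul_eq htr hdet hr
  obtain ⟨E, hE, rfl⟩ := exists_isIdempotentElem_eq_smul_add_smul
    (sub_smul_one_mul_sub_smul_one_fin_two hsum hprod) (isUnit_sub_of_mem_maximalIdeal hx hy)
  exact isStronglyRadClean_smul_add_smul hE (isUnit_one_sub_smul_of_mem_maximalIdeal hx)
    (isUnit_sub_of_mem_maximalIdeal hx isUnit_one) hy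

end Matrix

open Matrix in
theorem stmt12 {R : Type*} [CommRing R] [IsLocalRing R] :
    (∀ A : Matrix (Fin 2) (Fin 2) R, IsUnit A.trace → IsStronglyRadClean A) ↔
    (∀ lam ∈ Ideal.jacobson (⊥ : Ideal R), ∀ mu : R, IsUnit mu →
      ∃ x : R, x ^ 2 + mu * x + lam = 0) := by
  simp only [jacobson_eq_maximalIdeal ⊥ bot_ne_top]
  constructor
  · intro h lam hlam mu hmu
    have htr : IsUnit (!![0, -lam; 1, -mu] : Matrix (Fin 2) (Fin 2) R).trace := by
      simpa [trace_fin_two] using hmu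
    obtain ⟨x, hx⟩ := exists_root_of_isStronglyRadClean (h _ htr) htr (by simpa [det_fin_two])
    exact ⟨x, by simpa [trace_fin_two, det_fin_two] using hx⟩
  · intro h A htr
    by_cases hdet : IsUnit A.det
    · exact isStronglyRadClean_of_isUnit ((isUnit_iff_isUnit_det A).mpr hdet)
    · obtain ⟨r, hr⟩ := h A.det hdet (-A.trace) htr.neg
      exact isStronglyRadClean_of_root htr hdet (r := r) (by linear_combination hr)
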